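/- Let 𝔉 be a non-empty hereditary formation and H a subgroup of a finite group G. Then H is K-𝔉-subnormal in G if and only if one of the following holds: (i) H = G; (ii) H·G^𝔉 is a proper subgroup of G and H is K-𝔉-subnormal in H·G^𝔉; (iii) H·G^𝔉 = G, the normal closure H^G is a proper subgroup of G, and H is K-𝔉-subnormal in H^G. -/

import Mathlib

/-! Common definitions: chief factors, G-isomorphism of chief factors, chief factor
functions, the class `C(f)`, classes of finite groups, formations, residuals,
relative centralizers, internal direct products, minimal normal subgroups,
(K-)𝔉-subnormality. -/

/-- Conjugate of an element of a normal subgroup, as an element of the subgroup. -/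
def normalConj {G : Type} [Group G] {H : Subgroup G} (hH : H.Normal) (g : G) (x : ↥H) : ↥H :=
  ⟨g * ↑x * g⁻¹, hH.conj_mem ↑x x.2 g⟩

/-- `H/K` is a chief factor of `G`: both are normal in `G`, `K < H`, and no normal
subgroup of `G` lies strictly between them. -/
def IsChiefFactor (G : Type) [Group G] (H K : Subgroup G) : Prop :=
  H.Normal ∧ K.Normal ∧ K < H ∧
    ∀ L : Subgroup G, L.Normal → K < L → L < H → False

/-- The factors `H/K` and `M/N` are `G`-isomorphic (auxiliary version taking normality
proofs): there is a group isomorphism `φ : H/K ≃* M/N` commuting with the conjugation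
action of `G` on both factors. -/
def GIsoAux (G : Type) [Group G] (H K M N : Subgroup G)
    (hH : H.Normal) (hK : K.Normal) (hM : M.Normal) (hN : N.Normal) : Prop :=
  haveI := hK.subgroupOf H
  haveI := hN.subgroupOf M
  ∃ φ : (↥H ⧸ K.subgroupOf H) ≃* (↥M ⧸ N.subgroupOf M),
    ∀ (g : G) (x : ↥H) (y : ↥M),
      φ (QuotientGroup.mk x) = QuotientGroup.mk y →
        φ (QuotientGroup.mk (normalConj hH g x)) = QuotientGroup.mk (normalConj hM g y)

/-- The factors `H/K` and `M/N` are `G`-isomorphic. -/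
def IsGIsomorphicFactors (G : Type) [Group G] (H K M N : Subgroup G) : Prop :=
  ∃ (hH : H.Normal) (hK : K.Normal) (hM : M.Normal) (hN : N.Normal),
    GIsoAux G H K M N hH hK hM hN

/-- The type of functions assigning a Boolean value (`true` = 1, `false` = 0) to each
finite group `G` and pair of subgroups `H`, `K` (thought of as the factor `H/K`). -/
abbrev ChiefFactorFun : Type 1 :=
  ∀ (G : Type) [Group G] [Finite G], Subgroup G → Subgroup G → Bool

/-- `f` is a chief factor function: it is invariant under `G`-isomorphism of chief
factors and compatible with quotients. -/
structure IsChiefFactorFun (f : ChiefFactorFun) : Prop where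
  iso_inv : ∀ (G : Type) [Group G] [Finite G] (H K M N : Subgroup G),
    IsChiefFactor G H K → IsChiefFactor G M N → IsGIsomorphicFactors G H K M N →
      f G H K = f G M N
  quot_inv : ∀ (G : Type) [Group G] [Finite G] (H K N : Subgroup G) [N.Normal],
    IsChiefFactor G H K → N ≤ K →
      f G H K = f (G ⧸ N) (H.map (QuotientGroup.mk' N)) (K.map (QuotientGroup.mk' N))

/-- `G ∈ C(f)`: every chief factor of `G` has value 1 under `f`. -/
def CClass (f : ChiefFactorFun) (G : Type) [Group G] [Finite G] : Prop :=
  ∀ H K : Subgroup G, IsChiefFactor G H K → f G H K = true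

/-- `G/L ∈ C(f)`, for a normal subgroup `L` of `G`. -/
def CClassQuot (f : ChiefFactorFun) (G : Type) [Group G] [Finite G]
    (L : Subgroup G) (hL : L.Normal) : Prop :=
  haveI := hL
  CClass f (G ⧸ L)

open scoped commutatorElement in
/-- The centralizer `C_G(H/K) = {g : G | [g,h] ∈ K for all h ∈ H}` of the factor
`H/K` in `G` (for `K` normal in `G`). -/
def relCentralizer {G : Type} [Group G] (H K : Subgroup G) (hK : K.Normal) : Subgroup G where
  carrier := {g : G | ∀ x ∈ H, ⁅g, x⁆ ∈ K}
  one_mem' := by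
    intro x hx
    have h1 : ⁅(1 : G), x⁆ = 1 := by group
    rw [h1]; exact K.one_mem
  mul_mem' := by
    intro a b ha hb x hx
    have h1 : ⁅a * b, x⁆ = a * ⁅b, x⁆ * a⁻¹ * ⁅a, x⁆ := by group
    rw [h1]
    exact K.mul_mem (hK.conj_mem _ (hb x hx) a) (ha x hx)
  inv_mem' := by
    intro a ha x hx
    have h1 : ⁅a⁻¹, x⁆ = a⁻¹ * ⁅a, x⁆⁻¹ * a⁻¹⁻¹ := by group
    rw [h1]
    exact hK.conj_mem _ (K.inv_mem (ha x hx)) a⁻¹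

/-- A class of finite groups, given as a predicate on finite group types. -/
abbrev GroupClass : Type 1 := ∀ (G : Type) [Group G] [Finite G], Prop

/-- The class `𝔛` is non-empty. -/
def GroupClassNonempty (𝔛 : GroupClass) : Prop :=
  ∃ (G : Type) (g : Group G) (f : Finite G), @𝔛 G g f

/-- `G/L ∈ 𝔛`, for a normal subgroup `L` of `G`. -/
def QuotientIn (𝔛 : GroupClass) (G : Type) [Group G] [Finite G]
    (L : Subgroup G) (hL : L.Normal) : Prop :=
  haveI := hL
  𝔛 (G ⧸ L)

/-- `𝔛` is a formation: a class of finite groups (closed under isomorphism) which is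
closed under taking quotients and under subdirect products. -/
structure IsFormation (𝔛 : GroupClass) : Prop where
  iso_closed : ∀ (G : Type) [Group G] [Finite G] (H : Type) [Group H] [Finite H],
    (G ≃* H) → 𝔛 G → 𝔛 H
  quot_closed : ∀ (G : Type) [Group G] [Finite G] (N : Subgroup G) [N.Normal],
    𝔛 G → 𝔛 (G ⧸ N)
  subdirect_closed : ∀ (G : Type) [Group G] [Finite G] (N M : Subgroup G)
    [N.Normal] [M.Normal], N ⊓ M = ⊥ → 𝔛 (G ⧸ N) → 𝔛 (G ⧸ M) → 𝔛 G

/-- `𝔛` is hereditary: closed under taking subgroups. -/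
def IsHereditary (𝔛 : GroupClass) : Prop :=
  ∀ (G : Type) [Group G] [Finite G], 𝔛 G → ∀ H : Subgroup G, 𝔛 ↥H

/-- `R` is the `𝔛`-residual of `G`: the smallest normal subgroup of `G` whose
quotient lies in `𝔛`. -/
def IsResidual (𝔛 : GroupClass) (G : Type) [Group G] [Finite G] (R : Subgroup G) : Prop :=
  ∃ hR : R.Normal, QuotientIn 𝔛 G R hR ∧
    ∀ (L : Subgroup G) (hL : L.Normal), QuotientIn 𝔛 G L hL → R ≤ L

/-- `A` is the internal direct product of the family of subgroups `B i`: each `B i`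
is a subgroup of `A` normal in `A`, together they generate `A`, and each of them
intersects the subgroup generated by the others trivially. -/
def IsInternalDirectProduct {G : Type} [Group G] (A : Subgroup G)
    {ι : Type} (B : ι → Subgroup G) : Prop :=
  (∀ i, B i ≤ A) ∧ (∀ i, ((B i).subgroupOf A).Normal) ∧ (⨆ i, B i) = A ∧
    ∀ i, B i ⊓ (⨆ (j) (_ : j ≠ i), B j) = ⊥

/-- A non-abelian simple group. -/
def IsNonabelianSimple (S : Type) [Group S] : Prop :=
  IsSimpleGroup S ∧ ∃ x y : S, x * y ≠ y * x

/-- `A` is a minimal normal subgroup of `G`. -/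
def IsMinimalNormal {G : Type} [Group G] (A : Subgroup G) : Prop :=
  A.Normal ∧ A ≠ ⊥ ∧ ∀ B : Subgroup G, B.Normal → B ≤ A → B ≠ ⊥ → B = A

/-- `H` is a subnormal subgroup of `G`. -/
def IsSubnormal (G : Type) [Group G] (H : Subgroup G) : Prop :=
  ∃ (n : ℕ) (c : ℕ → Subgroup G), c 0 = H ∧ c n = ⊤ ∧
    ∀ i < n, c i ≤ c (i + 1) ∧ ((c i).subgroupOf (c (i + 1))).Normal

/-- One step in a K-`𝔉`-subnormal chain: `A ≤ B`, and either `A` is normal in `B` or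
`B / Core_B(A) ∈ 𝔉`. -/
def KFStep (𝔛 : GroupClass) {G : Type} [Group G] [Finite G] (A B : Subgroup G) : Prop :=
  A ≤ B ∧ ((A.subgroupOf B).Normal ∨ 𝔛 (↥B ⧸ (A.subgroupOf B).normalCore))

/-- `H` is a K-`𝔉`-subnormal subgroup of `G`. -/
def IsKFSubnormal (𝔛 : GroupClass) (G : Type) [Group G] [Finite G] (H : Subgroup G) : Prop :=
  ∃ (n : ℕ) (c : ℕ → Subgroup G), c 0 = H ∧ c n = ⊤ ∧
    ∀ i < n, KFStep 𝔛 (c i) (c (i + 1))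

/-- One step in an `𝔉`-subnormal chain (for hereditary `𝔉`): `A < B` and
`B / Core_B(A) ∈ 𝔉`. -/
def FStep (𝔛 : GroupClass) {G : Type} [Group G] [Finite G] (A B : Subgroup G) : Prop :=
  A < B ∧ 𝔛 (↥B ⧸ (A.subgroupOf B).normalCore)

/-- `H` is an `𝔉`-subnormal subgroup of `G` (for hereditary `𝔉`). -/
def IsFSubnormal (𝔛 : GroupClass) (G : Type) [Group G] [Finite G] (H : Subgroup G) : Prop :=
  H = ⊤ ∨ ∃ (n : ℕ) (c : ℕ → Subgroup G), c 0 = H ∧ c n = ⊤ ∧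
    ∀ i < n, FStep 𝔛 (c i) (c (i + 1))

/-! Since `G/Core_G(M) ∈ 𝔉` exactly when `G^𝔉 ≤ M`, the last link `M ⊆ G` of a K-`𝔉`-subnormal
chain has `M` normal in `G` or `G^𝔉 ≤ M`. So if `H < G` is K-`𝔉`-subnormal and `H G^𝔉 = G`, the
link above `H` is normal and `H^G < G`. Conversely a chain from `H` up to `H G^𝔉` or to `H^G`
extends to `G` by one more link. Since `𝔉` is hereditary, chains in `G` restrict to chains in any
subgroup. -/

/-- `KFStep 𝔉 A B` unfolds to `A ≤ B ∧ IsKFNormal 𝔉 (A.subgroupOf B)`. -/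
def IsKFNormal (𝔉 : GroupClass) {B : Type} [Group B] [Finite B] (X : Subgroup B) : Prop :=
  X.Normal ∨ 𝔉 (B ⧸ X.normalCore)

namespace IsFormation

variable {𝔉 : GroupClass} {P Q : Type} [Group P] [Finite P] [Group Q] [Finite Q]

theorem of_surjective (hform : IsFormation 𝔉) (f : P →* Q) (hf : Function.Surjective f)
    (hP : 𝔉 P) : 𝔉 Q :=
  hform.iso_closed _ _ (QuotientGroup.quotientKerEquivOfSurjective f hf)
    (hform.quot_closed P f.ker hP)

theorem quotient_of_le (hform : IsFormation 𝔉) {N M : Subgroup P} [N.Normal] [M.Normal]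
    (h : N ≤ M) (hN : 𝔉 (P ⧸ N)) : 𝔉 (P ⧸ M) :=
  hform.of_surjective (QuotientGroup.map N M (MonoidHom.id P) h)
    (QuotientGroup.map_surjective_of_surjective N M (MonoidHom.id P)
      (QuotientGroup.mk'_surjective M) h) hN

end IsFormation

namespace IsKFNormal

variable {𝔉 : GroupClass} {P Q : Type} [Group P] [Finite P] [Group Q] [Finite Q]

theorem comap (hform : IsFormation 𝔉) (hhered : IsHereditary 𝔉) (f : P →* Q)
    {X : Subgroup Q} (hX : IsKFNormal 𝔉 X) : IsKFNormal 𝔉 (X.comap f) := by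
  refine hX.imp (fun hN => hN.comap f) fun hF => ?_
  let φ : P →* Q ⧸ X.normalCore := (QuotientGroup.mk' X.normalCore).comp f
  have hker : φ.ker ≤ (X.comap f).normalCore :=
    Subgroup.normal_le_normalCore.mpr fun p hp =>
      X.normalCore_le ((QuotientGroup.eq_one_iff (f p)).mp hp)
  -- `P / ker φ` is isomorphic to a subgroup of `Q / Core_Q(X) ∈ 𝔉`.
  exact hform.quotient_of_le hker
    (hform.iso_closed _ _ (QuotientGroup.quotientKerEquivRange φ).symm (hhered _ hF φ.range))

theorem map (hform : IsFormation 𝔉) {f : P →* Q} (hf : Function.Surjective f)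
    {X : Subgroup P} (hX : IsKFNormal 𝔉 X) : IsKFNormal 𝔉 (X.map f) := by
  refine hX.imp (fun hN => hN.map f hf) fun hF => ?_
  have hcore : X.normalCore ≤ (X.map f).normalCore.comap f := by
    have := X.normalCore_normal.map f hf
    exact Subgroup.map_le_iff_le_comap.mp
      (Subgroup.normal_le_normalCore.mpr (Subgroup.map_mono X.normalCore_le))
  exact hform.of_surjective (QuotientGroup.map _ _ f hcore)
    (QuotientGroup.map_surjective_of_surjective _ _ f
      ((QuotientGroup.mk'_surjective _).comp hf) hcore) hF

end IsKFNormal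

section

variable {𝔉 : GroupClass} {G : Type} [Group G] [Finite G]

theorem kfStep_top_iff_isKFNormal (hform : IsFormation 𝔉) {K : Subgroup G} :
    KFStep 𝔉 K ⊤ ↔ IsKFNormal 𝔉 K := by
  refine ⟨fun h => ?_, fun h => ⟨le_top, ?_⟩⟩
  · have := IsKFNormal.map hform (f := (⊤ : Subgroup G).subtype)
      (fun g => ⟨⟨g, trivial⟩, rfl⟩) h.2
    rwa [Subgroup.subgroupOf_map_subtype, inf_top_eq] at this
  · have := h.map hform (f := Subgroup.topEquiv.symm.toMonoidHom) (MulEquiv.surjective _)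
    rwa [Subgroup.map_equiv_eq_comap_symm'] at this

theorem IsResidual.quotient_normalCore_mem_iff (hform : IsFormation 𝔉) {R : Subgroup G}
    (hR : IsResidual 𝔉 G R) (K : Subgroup G) : 𝔉 (G ⧸ K.normalCore) ↔ R ≤ K := by
  obtain ⟨hRn, hGR, hmin⟩ := hR
  exact ⟨fun h => (hmin _ K.normalCore_normal h).trans K.normalCore_le,
    fun h => hform.quotient_of_le (Subgroup.normal_le_normalCore.mpr h) hGR⟩

theorem IsResidual.kfStep_top_iff (hform : IsFormation 𝔉) {R : Subgroup G}
    (hR : IsResidual 𝔉 G R) {K : Subgroup G} : KFStep 𝔉 K ⊤ ↔ K.Normal ∨ R ≤ K := by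
  rw [kfStep_top_iff_isKFNormal hform, IsKFNormal, hR.quotient_normalCore_mem_iff hform]

theorem KFStep.subgroupOf (hform : IsFormation 𝔉) (hhered : IsHereditary 𝔉) (K : Subgroup G)
    {A B : Subgroup G} (h : KFStep 𝔉 A B) : KFStep 𝔉 (A.subgroupOf K) (B.subgroupOf K) :=
  ⟨fun _ hx => h.1 hx,
    IsKFNormal.comap hform hhered
      ((K.subtype.comp (B.subgroupOf K).subtype).codRestrict B fun x => x.2) h.2⟩

theorem KFStep.map (hform : IsFormation 𝔉) {G' : Type} [Group G'] [Finite G'] {f : G →* G'}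
    (hf : Function.Injective f) {A B : Subgroup G} (h : KFStep 𝔉 A B) :
    KFStep 𝔉 (A.map f) (B.map f) := by
  refine ⟨Subgroup.map_mono h.1, ?_⟩
  have hAB : (A.map f).subgroupOf (B.map f) = (A.subgroupOf B).map (f.subgroupMap B) := by
    ext ⟨_, b, hb, rfl⟩
    simp only [Subgroup.mem_subgroupOf, Subgroup.mem_map_iff_mem hf, Subgroup.mem_map,
      Subtype.exists]
    exact ⟨fun ha => ⟨b, hb, ha, rfl⟩,
      fun ⟨a, _, ha, hab⟩ => hf (congrArg Subtype.val hab) ▸ ha⟩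
  show IsKFNormal 𝔉 _
  rw [hAB]
  exact IsKFNormal.map hform (f.subgroupMap_surjective B) h.2

theorem isKFSubnormal_top : IsKFSubnormal 𝔉 G ⊤ :=
  ⟨0, fun _ => ⊤, rfl, rfl, fun _ hi => absurd hi (Nat.not_lt_zero _)⟩

theorem IsKFSubnormal.subgroupOf (hform : IsFormation 𝔉) (hhered : IsHereditary 𝔉)
    {H : Subgroup G} (h : IsKFSubnormal 𝔉 G H) (K : Subgroup G) :
    IsKFSubnormal 𝔉 K (H.subgroupOf K) := by
  obtain ⟨n, c, rfl, hn, hc⟩ := h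
  exact ⟨n, fun i => (c i).subgroupOf K, rfl, by simp [hn],
    fun i hi => (hc i hi).subgroupOf hform hhered K⟩

theorem IsKFSubnormal.of_subgroupOf (hform : IsFormation 𝔉) {H K : Subgroup G} (hHK : H ≤ K)
    (h : IsKFSubnormal 𝔉 K (H.subgroupOf K)) (hK : KFStep 𝔉 K ⊤) : IsKFSubnormal 𝔉 G H := by
  obtain ⟨n, c, hc0, hcn, hc⟩ := h
  have hcK : (c n).map K.subtype = K := by
    rw [hcn, ← MonoidHom.range_eq_map, Subgroup.range_subtype]
  refine ⟨n + 1, fun i => if i ≤ n then (c i).map K.subtype else ⊤, ?_, by simp, fun i hi => ?_⟩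
  · simp [hc0, Subgroup.subgroupOf_map_subtype, hHK]
  · rcases Nat.lt_or_eq_of_le (Nat.lt_succ_iff.mp hi) with hi | rfl
    · simp only [if_pos hi.le, if_pos (Nat.succ_le_of_lt hi)]
      exact (hc i hi).map hform K.subtype_injective
    · simpa [hcK] using hK

theorem IsKFSubnormal.exists_kfStep_top {H : Subgroup G} (h : IsKFSubnormal 𝔉 G H)
    (hH : H ≠ ⊤) : ∃ M, H ≤ M ∧ M ≠ ⊤ ∧ KFStep 𝔉 M ⊤ := by
  obtain ⟨n, c, rfl, hn, hc⟩ := h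
  induction n generalizing c with
  | zero => exact absurd hn hH
  | succ n ih =>
    by_cases hc1 : c 1 = ⊤
    · exact ⟨c 0, le_rfl, hH, hc1 ▸ hc 0 n.succ_pos⟩
    · obtain ⟨M, hM, hMtop, hMstep⟩ :=
        ih (fun i => c (i + 1)) hc1 hn fun i hi => hc (i + 1) (by omega)
      exact ⟨M, (hc 0 n.succ_pos).1.trans hM, hMtop, hMstep⟩

end

theorem stmt17_general (𝔉 : GroupClass) (hform : IsFormation 𝔉) (hhered : IsHereditary 𝔉)
    (G : Type) [Group G] [Finite G] (H : Subgroup G)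
    (R : Subgroup G) (hR : IsResidual 𝔉 G R) :
    IsKFSubnormal 𝔉 G H ↔
      (H = ⊤ ∨
        (H ⊔ R < ⊤ ∧ IsKFSubnormal 𝔉 ↥(H ⊔ R) (H.subgroupOf (H ⊔ R))) ∨
        (H ⊔ R = ⊤ ∧ Subgroup.normalClosure (H : Set G) < ⊤ ∧
          IsKFSubnormal 𝔉 ↥(Subgroup.normalClosure (H : Set G))
            (H.subgroupOf (Subgroup.normalClosure (H : Set G))))) := by
  constructor
  · intro h
    by_cases hH : H = ⊤
    · exact Or.inl hH
    by_cases hHR : H ⊔ R = ⊤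
    · obtain ⟨M, hHM, hMtop, hM⟩ := h.exists_kfStep_top hH
      rcases (hR.kfStep_top_iff hform).mp hM with hMn | hRM
      · have hHG : Subgroup.normalClosure (H : Set G) ≤ M :=
          Subgroup.normalClosure_le_normal hHM
        exact Or.inr (Or.inr ⟨hHR, hHG.trans_lt (lt_top_iff_ne_top.mpr hMtop),
          h.subgroupOf hform hhered _⟩)
      · exact absurd (top_le_iff.mp (hHR ▸ sup_le hHM hRM)) hMtop
    · exact Or.inr (Or.inl ⟨lt_top_iff_ne_top.mpr hHR, h.subgroupOf hform hhered _⟩)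
  · rintro (rfl | ⟨-, hH⟩ | ⟨-, -, hH⟩)
    · exact isKFSubnormal_top
    · exact hH.of_subgroupOf hform le_sup_left
        ((hR.kfStep_top_iff hform).mpr (Or.inr le_sup_right))
    · exact hH.of_subgroupOf hform Subgroup.le_normalClosure
        ((hR.kfStep_top_iff hform).mpr (Or.inl Subgroup.normalClosure_normal))

/-- Let `𝔉` be a non-empty hereditary formation, `G` a finite group
with `𝔉`-residual `R = G^𝔉`, and `H ≤ G`. Then `H` is K-`𝔉`-subnormal in `G` iff
(i) `H = G`; or (ii) `H⬝G^𝔉 < G` and `H` is K-`𝔉`-subnormal in `H⬝G^𝔉`; or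
(iii) `H⬝G^𝔉 = G`, `H^G < G` and `H` is K-`𝔉`-subnormal in `H^G`. -/
theorem stmt17 (𝔉 : GroupClass) (hform : IsFormation 𝔉) (hhered : IsHereditary 𝔉)
    (hne : GroupClassNonempty 𝔉)
    (G : Type) [Group G] [Finite G] (H : Subgroup G)
    (R : Subgroup G) (hR : IsResidual 𝔉 G R) :
    IsKFSubnormal 𝔉 G H ↔
      (H = ⊤ ∨
        (H ⊔ R < ⊤ ∧ IsKFSubnormal 𝔉 ↥(H ⊔ R) (H.subgroupOf (H ⊔ R))) ∨
        (H ⊔ R = ⊤ ∧ Subgroup.normalClosure (H : Set G) < ⊤ ∧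
          IsKFSubnormal 𝔉 ↥(Subgroup.normalClosure (H : Set G))
            (H.subgroupOf (Subgroup.normalClosure (H : Set G))))) :=
  stmt17_general 𝔉 hform hhered G H R hR
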